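/- arXiv:1610.06638 — 3 statements merged into one kernel-verified Lean document; each statement's English description precedes it below -/
import Mathlib

section
/- Let S be a ring that decomposes as a product S = S₁ × S₂, where S₁ is a Boolean ring and every element of S₂ is a sum of two units. Let R be a subring of S that is stable under left multiplication by units of S. Then R decomposes as R = R₁ × S₂ where R₁ = {s₁ ∈ S₁ : ∃ s₂ ∈ S₂, (s₁, s₂) ∈ R} is a Boolean ring. -/
/-- If `S = S₁ × S₂` with `S₁` Boolean and every element of `S₂` a sum of two units,
and `R` is a subring of `S` stable under left multiplication by units of `S`, then
`R = R₁ × S₂` where `R₁ = {s₁ | ∃ s₂, (s₁, s₂) ∈ R}` is a Boolean ring. -/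
theorem stmt_0 (S₁ S₂ : Type*) [Ring S₁] [Ring S₂]
    (hBool : ∀ x : S₁, x * x = x)
    (hsum : ∀ s₂ : S₂, ∃ u v : S₂ˣ, s₂ = ↑u + ↑v)
    (R : Subring (S₁ × S₂))
    (hstab : ∀ (u : (S₁ × S₂)ˣ) (r : S₁ × S₂), r ∈ R → (u : S₁ × S₂) * r ∈ R) :
    (∀ p : S₁ × S₂, p ∈ R ↔ ∃ s₂ : S₂, (p.1, s₂) ∈ R) ∧
      (∀ a : S₁, (∃ s₂ : S₂, (a, s₂) ∈ R) → a * a = a) := by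
  -- units of S₂ give elements (1, v) of R
  have hunit : ∀ v : S₂ˣ, ((1 : S₁), (v : S₂)) ∈ R := by
    intro v
    have := hstab ⟨((1 : S₁), (v : S₂)), ((1 : S₁), ((v⁻¹ : S₂ˣ) : S₂)),
      by ext <;> simp, by ext <;> simp⟩ 1 R.one_mem
    simpa using this
  have hzero : ∀ t : S₂, ((0 : S₁), t) ∈ R := by
    intro t
    obtain ⟨u, v, huv⟩ := hsum (t + 2)
    have h1 : ((0 : S₁), (u : S₂) - 1) ∈ R := by
      have h := R.sub_mem (hunit u) R.one_mem
      have e : (((1 : S₁), (u : S₂)) - 1) = ((0 : S₁), (u : S₂) - 1) := by ext <;> simp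
      rwa [e] at h
    have h2 : ((0 : S₁), (v : S₂) - 1) ∈ R := by
      have h := R.sub_mem (hunit v) R.one_mem
      have e : (((1 : S₁), (v : S₂)) - 1) = ((0 : S₁), (v : S₂) - 1) := by ext <;> simp
      rwa [e] at h
    have := R.add_mem h1 h2
    have heq : (((0 : S₁), (u : S₂) - 1) + ((0 : S₁), (v : S₂) - 1)) = ((0 : S₁), t) := by
      ext
      · simp
      · simp only [Prod.snd_add]
        rw [sub_add_sub_comm, ← huv]
        norm_num
    rwa [heq] at this
  constructor
  · intro p
    constructor
    · intro hp
      exact ⟨p.2, hp⟩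
    · rintro ⟨s₂, hs⟩
      have := R.add_mem hs (hzero (p.2 - s₂))
      have heq : ((p.1, s₂) + ((0 : S₁), p.2 - s₂)) = p := by
        ext <;> simp
      rwa [heq] at this
  · intro a _
    exact hBool a
end

section
/- Let T be a prime ring and V a uniform right ideal of T. Let L = {v ∈ V : r_T(v) ∩ V ≠ 0}, where r_T(v) denotes the right annihilator of v in T. If T is right noetherian, then every element of L is nilpotent. -/
/-- Let `T` be a prime right noetherian ring and `V` a nonzero uniform right ideal of `T`
(right ideals are `Tᵐᵒᵖ`-submodules of `T`).  Then every element of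
`L = {v ∈ V : r_T(v) ∩ V ≠ 0}` is nilpotent. -/
theorem stmt_8 (T : Type*) [Ring T] [IsNoetherian Tᵐᵒᵖ T]
    (hprime : ∀ I J : TwoSidedIdeal T, (∀ a ∈ I, ∀ b ∈ J, a * b = 0) → I = ⊥ ∨ J = ⊥)
    (V : Submodule Tᵐᵒᵖ T) (hV : V ≠ ⊥)
    (huniform : ∀ A B : Submodule Tᵐᵒᵖ T,
      A ≤ V → B ≤ V → A ≠ ⊥ → B ≠ ⊥ → A ⊓ B ≠ ⊥) :
    ∀ v ∈ V, (∃ t ∈ V, t ≠ 0 ∧ v * t = 0) → IsNilpotent v := by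
  rintro v hvV ⟨t₀, ht₀V, ht₀ne, hvt₀⟩
  have smul_eq : ∀ (c : Tᵐᵒᵖ) (x : T), c • x = x * c.unop := fun c x => rfl
  set rann : ℕ → Submodule Tᵐᵒᵖ T := fun k =>
    { carrier := {x | v ^ k * x = 0}
      add_mem' := by intro a b ha hb; simp only [Set.mem_setOf_eq] at *; rw [mul_add, ha, hb, add_zero]
      zero_mem' := by simp
      smul_mem' := by
        intro c x hx
        simp only [Set.mem_setOf_eq] at *
        rw [smul_eq, ← mul_assoc, hx, zero_mul] } with hrann
  have mem_rann : ∀ k x, x ∈ rann k ↔ v ^ k * x = 0 := fun k x => Iff.rfl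
  have hmono : Monotone rann := by
    apply monotone_nat_of_le_succ
    intro k x hx
    rw [mem_rann] at *
    rw [pow_succ', mul_assoc, hx, mul_zero]
  obtain ⟨m, hm⟩ := (monotone_stabilizes_iff_noetherian.mpr inferInstance) ⟨rann, hmono⟩
  set n := m + 1 with hn
  have hstab : rann n = rann (2 * n) := by
    have h1 := hm n (Nat.le_succ m)
    have h2 := hm (2 * n) (by omega)
    simp only [OrderHom.coe_mk] at h1 h2
    rw [← h1, ← h2]
  have hvnV : v ^ n ∈ V := by
    have : v ^ n = MulOpposite.op (v ^ m) • v := by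
      rw [smul_eq, MulOpposite.unop_op, ← pow_succ']
    rw [this]; exact V.smul_mem _ hvV
  have ht₀r : t₀ ∈ rann n ⊓ V := by
    rw [Submodule.mem_inf]
    refine ⟨?_, ht₀V⟩
    rw [mem_rann, pow_succ, mul_assoc, hvt₀, mul_zero]
  -- key: v^n * (t * w) = 0 for all t, and w ∈ V
  have key : ∀ (t w : T), w ∈ V → v ^ n * (t * w) = 0 := by
    intro t w hwV
    by_contra ha
    set a := v ^ n * (t * w) with hadef
    have haV : a ∈ V := by
      have : a = MulOpposite.op (t * w) • (v ^ n) := rfl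
      rw [this]; exact V.smul_mem _ hvnV
    have hAle : Submodule.span Tᵐᵒᵖ {a} ≤ V := by
      rw [Submodule.span_singleton_le_iff_mem]; exact haV
    have hAne : Submodule.span Tᵐᵒᵖ {a} ≠ ⊥ := by
      rw [Submodule.ne_bot_iff]
      exact ⟨a, Submodule.mem_span_singleton_self a, ha⟩
    have hBne : rann n ⊓ V ≠ ⊥ := by
      rw [Submodule.ne_bot_iff]; exact ⟨t₀, ht₀r, ht₀ne⟩
    have hint := huniform _ _ hAle inf_le_right hAne hBne
    rw [Submodule.ne_bot_iff] at hint
    obtain ⟨x, hx, hxne⟩ := hint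
    rw [Submodule.mem_inf, Submodule.mem_inf] at hx
    obtain ⟨hxA, hxr, _⟩ := hx
    obtain ⟨c, hc⟩ := Submodule.mem_span_singleton.mp hxA
    rw [smul_eq] at hc
    apply hxne
    have hxu : x = v ^ n * (t * w * c.unop) := by
      rw [← hc, hadef, mul_assoc, mul_assoc]
    have hx2 : v ^ n * x = 0 := (mem_rann n x).mp hxr
    have hu : t * w * c.unop ∈ rann (2 * n) := by
      rw [mem_rann, two_mul, pow_add, mul_assoc, ← hxu, hx2]
    rw [← hstab, mem_rann] at hu
    rw [hxu, hu]
  -- the defining predicate of the first two-sided ideal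
  set P : T → Prop := fun y => ∀ t w, w ∈ V → y * (t * w) = 0 with hP
  have Pright : ∀ (y s : T), P y → P (y * s) := by
    intro y s hy t w hw
    rw [mul_assoc, ← mul_assoc s, hy (s * t) w hw]
  set I : TwoSidedIdeal T := TwoSidedIdeal.mk' {x | P x}
    (by intro t w hw; simp)
    (by intro x y hx hy t w hw; rw [add_mul, hx t w hw, hy t w hw, add_zero])
    (by intro x hx t w hw; rw [neg_mul, hx t w hw, neg_zero])
    (by intro x y hy t w hw; rw [mul_assoc, hy t w hw, mul_zero])
    (fun hx => Pright _ _ hx) with hIdef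
  set J : TwoSidedIdeal T := TwoSidedIdeal.mk' {x | ∀ y, P y → y * x = 0}
    (by intro y hy; rw [mul_zero])
    (by intro x z hx hz y hy; rw [mul_add, hx y hy, hz y hy, add_zero])
    (by intro x hx y hy; rw [mul_neg, hx y hy, neg_zero])
    (by intro s x hx y hy; rw [← mul_assoc, hx (y * s) (Pright y s hy)])
    (by intro x s hx y hy; rw [← mul_assoc, hx y hy, zero_mul]) with hJdef
  have hIJ : ∀ a ∈ I, ∀ b ∈ J, a * b = 0 := by
    intro a ha b hb
    rw [hIdef, TwoSidedIdeal.mem_mk'] at ha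
    rw [hJdef, TwoSidedIdeal.mem_mk'] at hb
    exact hb a ha
  rcases hprime I J hIJ with hI | hJ
  · refine ⟨n, ?_⟩
    have hvnI : v ^ n ∈ I := by
      rw [hIdef, TwoSidedIdeal.mem_mk']
      intro t w hw; exact key t w hw
    rw [hI, TwoSidedIdeal.mem_bot] at hvnI
    exact hvnI
  · exfalso
    apply ht₀ne
    have ht₀J : t₀ ∈ J := by
      rw [hJdef, TwoSidedIdeal.mem_mk']
      intro y hy
      have := hy 1 t₀ ht₀V
      rwa [one_mul] at this
    rw [hJ, TwoSidedIdeal.mem_bot] at ht₀J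
    exact ht₀J
end

section
/- Let T be a prime ring, V a uniform right ideal of T, and L = {v ∈ V : r_T(v) ∩ V ≠ 0}. If L is multiplicatively closed and nilpotent, then L² = 0. -/
/-!
Let `L` be closed under `a, b ↦ a * t * b` for all `t`, as the left zero divisors in a right
ideal are. If `L ^ (n + 1) = 0` with `n ≥ 2`, write a product of `n` elements of `L` as
`x = v₁ v₂ p`. For every `t`, `(v₁ v₂) t x = v₁ (v₂ t v₁) v₂ p` is a product of `n + 1` elements
of `L`, hence zero, so primeness gives `x = 0` or `v₁ v₂ = 0`, and in both cases `x = 0`.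
Descending in this way from any vanishing power reaches `L ^ 2 = 0`.
-/

open scoped Pointwise

def IsPrimeRing (R : Type*) [Ring R] : Prop :=
  ∀ I J : TwoSidedIdeal R, (∀ a ∈ I, ∀ b ∈ J, a * b = 0) → I = ⊥ ∨ J = ⊥

namespace IsPrimeRing

variable {R : Type*} [Ring R]

open TwoSidedIdeal in
theorem eq_zero_or_eq_zero_of_forall_mul_mul_eq_zero (hR : IsPrimeRing R) {x y : R}
    (h : ∀ t, x * t * y = 0) : x = 0 ∨ y = 0 := by
  have hx_span : ∀ b ∈ span {y}, ∀ t, x * t * b = 0 := fun b hb => by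
    induction hb using span_induction with
    | mem b hb => rw [Set.mem_singleton_iff.1 hb]; exact h
    | zero => simp
    | add b c _ _ hb hc => intro t; rw [mul_add, hb, hc, add_zero]
    | neg b _ hb => intro t; rw [mul_neg, hb, neg_zero]
    | left_absorb r b _ hb => intro t; rw [← mul_assoc, mul_assoc x, hb]
    | right_absorb r b _ hb => intro t; rw [← mul_assoc, hb, zero_mul]
  have hspan : ∀ a ∈ span {x}, ∀ b ∈ span {y}, a * b = 0 := fun a ha => by
    induction ha using span_induction with
    | mem a ha => rw [Set.mem_singleton_iff.1 ha]; exact fun b hb => by simpa using hx_span b hb 1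
    | zero => simp
    | add a c _ _ ha hc => intro b hb; rw [add_mul, ha b hb, hc b hb, add_zero]
    | neg a _ ha => intro b hb; rw [neg_mul, ha b hb, neg_zero]
    | left_absorb r a _ ha => intro b hb; rw [mul_assoc, ha b hb, mul_zero]
    | right_absorb r a _ ha => intro b hb; rw [mul_assoc]; exact ha _ (mul_mem_left _ _ _ hb)
  have eq_zero_of_span_eq_bot {z : R} (hz : span {z} = ⊥) : z = 0 := by
    simpa [hz] using subset_span (Set.mem_singleton z)
  exact (hR _ _ hspan).imp eq_zero_of_span_eq_bot eq_zero_of_span_eq_bot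

end IsPrimeRing

namespace Set

theorem pow_subset_zero_of_forall_list_prod {M : Type*} [MonoidWithZero M] {L : Set M} {n : ℕ}
    (h : ∀ l : List M, (∀ x ∈ l, x ∈ L) → l.length = n → l.prod = 0) : L ^ n ⊆ {0} := by
  intro a ha
  obtain ⟨f, rfl⟩ := mem_pow.1 ha
  exact h _ (by simp) List.length_ofFn

theorem pow_subset_zero_of_le {M : Type*} [MonoidWithZero M] {L : Set M} {m n : ℕ}
    (hm : L ^ m ⊆ {0}) (hmn : m ≤ n) : L ^ n ⊆ {0} := by
  induction n, hmn using Nat.le_induction with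
  | base => exact hm
  | succ n _ ih =>
    intro x hx
    rw [pow_succ] at hx
    obtain ⟨a, ha, b, -, rfl⟩ := mem_mul.1 hx
    rw [mem_singleton_iff.1 (ih ha), zero_mul]
    rfl

section PrimeRing

variable {R : Type*} [Ring R] {L : Set R}

theorem pow_subset_zero_of_pow_succ_subset_zero (hR : IsPrimeRing R)
    (hL : ∀ a ∈ L, ∀ b ∈ L, ∀ t, a * t * b ∈ L) {n : ℕ} (hn : L ^ (n + 3) ⊆ {0}) :
    L ^ (n + 2) ⊆ {0} := by
  intro x hx
  rw [pow_succ', pow_succ'] at hx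
  obtain ⟨v₁, hv₁, _, hv₂p, rfl⟩ := mem_mul.1 hx
  obtain ⟨v₂, hv₂, p, hp, rfl⟩ := mem_mul.1 hv₂p
  have h : ∀ t, v₁ * v₂ * t * (v₁ * (v₂ * p)) = 0 := fun t => by
    have hmem : v₁ * ((v₂ * t * v₁) * (v₂ * p)) ∈ L ^ (n + 3) := by
      rw [pow_succ', pow_succ', pow_succ']
      exact mul_mem_mul hv₁ (mul_mem_mul (hL _ hv₂ _ hv₁ t) (mul_mem_mul hv₂ hp))
    simpa only [mul_assoc] using mem_singleton_iff.1 (hn hmem)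
  rcases hR.eq_zero_or_eq_zero_of_forall_mul_mul_eq_zero h with h12 | hx
  · rw [← mul_assoc, h12, zero_mul]; rfl
  · exact hx

theorem sq_subset_zero_of_pow_subset_zero (hR : IsPrimeRing R)
    (hL : ∀ a ∈ L, ∀ b ∈ L, ∀ t, a * t * b ∈ L) {n : ℕ} (hn : L ^ n ⊆ {0}) :
    L ^ 2 ⊆ {0} := by
  have hn2 : L ^ (n + 2) ⊆ {0} := pow_subset_zero_of_le hn (by omega)
  clear hn
  induction n with
  | zero => exact hn2
  | succ n ih => exact ih (pow_subset_zero_of_pow_succ_subset_zero hR hL hn2)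

end PrimeRing

end Set

def leftZeroDivisorsIn {T : Type*} [Ring T] (V : Submodule Tᵐᵒᵖ T) : Set T :=
  {v | v ∈ V ∧ ∃ t ∈ V, t ≠ 0 ∧ v * t = 0}

theorem mul_mul_mem_leftZeroDivisorsIn {T : Type*} [Ring T] {V : Submodule Tᵐᵒᵖ T} {a b : T}
    (ha : a ∈ V) (hb : b ∈ leftZeroDivisorsIn V) (t : T) : a * t * b ∈ leftZeroDivisorsIn V := by
  obtain ⟨-, s, hsV, hs0, hbs⟩ := hb
  refine ⟨?_, s, hsV, hs0, by rw [mul_assoc, hbs, mul_zero]⟩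
  simpa only [op_smul_eq_mul, mul_assoc] using V.smul_mem (MulOpposite.op (t * b)) ha

theorem stmt_9_general (T : Type*) [Ring T]
    (hprime : ∀ I J : TwoSidedIdeal T, (∀ a ∈ I, ∀ b ∈ J, a * b = 0) → I = ⊥ ∨ J = ⊥)
    (V : Submodule Tᵐᵒᵖ T)
    (L : Set T) (hL : L = {v : T | v ∈ V ∧ ∃ t ∈ V, t ≠ 0 ∧ v * t = 0})
    (hnil : ∃ n : ℕ, 0 < n ∧
      ∀ l : List T, (∀ x ∈ l, x ∈ L) → l.length = n → l.prod = 0) :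
    ∀ a ∈ L, ∀ b ∈ L, a * b = 0 := by
  obtain ⟨n, -, hn⟩ := hnil
  have hsandwich : ∀ a ∈ L, ∀ b ∈ L, ∀ t, a * t * b ∈ L := by
    subst hL
    exact fun a ha b hb t => mul_mul_mem_leftZeroDivisorsIn ha.1 hb t
  have hsq : L ^ 2 ⊆ {0} := Set.sq_subset_zero_of_pow_subset_zero hprime hsandwich
    (Set.pow_subset_zero_of_forall_list_prod hn)
  intro a ha b hb
  exact hsq (by rw [sq]; exact Set.mul_mem_mul ha hb)

/-- Let `T` be a prime ring, `V` a nonzero uniform right ideal of `T`, and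
`L = {v ∈ V : r_T(v) ∩ V ≠ 0}`.  If `L` is multiplicatively closed and nilpotent,
then `L² = 0`. -/
theorem stmt_9 (T : Type*) [Ring T]
    (hprime : ∀ I J : TwoSidedIdeal T, (∀ a ∈ I, ∀ b ∈ J, a * b = 0) → I = ⊥ ∨ J = ⊥)
    (V : Submodule Tᵐᵒᵖ T) (hV : V ≠ ⊥)
    (huniform : ∀ A B : Submodule Tᵐᵒᵖ T,
      A ≤ V → B ≤ V → A ≠ ⊥ → B ≠ ⊥ → A ⊓ B ≠ ⊥)
    (L : Set T) (hL : L = {v : T | v ∈ V ∧ ∃ t ∈ V, t ≠ 0 ∧ v * t = 0})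
    (hmul : ∀ a ∈ L, ∀ b ∈ L, a * b ∈ L)
    (hnil : ∃ n : ℕ, 0 < n ∧
      ∀ l : List T, (∀ x ∈ l, x ∈ L) → l.length = n → l.prod = 0) :
    ∀ a ∈ L, ∀ b ∈ L, a * b = 0 :=
  stmt_9_general T hprime V L hL hnil
end
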